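/- arXiv:1912.06862 — 2 statements merged into one kernel-verified Lean document; each statement's English description precedes it below -/
import Mathlib

section
/- In the LPT schedule of a long BJSP instance (all p_j ≥ m) with g = 1, every maximal slack period has length at most m − 1. Formally: if during a maximal interval [s,t] of slots each slot has fewer than m alive jobs and exactly one job begins per slot, and every job has processing time at least m, then t − s + 1 ≤ m − 1. -/
/-! The slots `a, …, a + m - 1` of a slack period of length at least `m` each see a job
start. Since every job runs for at least `m` slots, these `m` jobs are all still alive at slot
`a + m - 1`, contradicting that fewer than `m` jobs are alive there. -/

open Finset

section Schedule

variable {ι : Type*} [Fintype ι] (s p : ι → ℕ)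

theorem card_le_card_filter_start_mem_Ico {a k : ℕ}
    (hstart : ∀ i < k, ∃ j, s j = a + i) :
    k ≤ #{j | s j ∈ Ico a (a + k)} := by
  have hsurj : Set.SurjOn s ↑({j | s j ∈ Ico a (a + k)} : Finset ι) ↑(Ico a (a + k)) := by
    intro u hu
    obtain ⟨j, hj⟩ := hstart (u - a) (by simp at hu; omega)
    refine ⟨j, ?_, ?_⟩ <;> simp at hu ⊢ <;> omega
  simpa using card_le_card_of_surjOn s hsurj

theorem card_le_card_alive_of_forall_start {a k : ℕ} (hp : ∀ j, k ≤ p j)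
    (hstart : ∀ i < k, ∃ j, s j = a + i) :
    k ≤ #{j | s j ≤ a + k - 1 ∧ a + k - 1 < s j + p j} := by
  refine (card_le_card_filter_start_mem_Ico s hstart).trans (card_le_card ?_)
  intro j hj
  have := hp j
  simp only [mem_filter, mem_univ, true_and, mem_Ico] at hj ⊢
  omega

end Schedule

theorem stmt_6_general (m n : ℕ) (p s : Fin n → ℕ) (hp : ∀ j, m ≤ p j)
    (a b : ℕ) (hab : a ≤ b)
    (hslack : ∀ u ∈ Finset.Icc a b,
      (Finset.univ.filter (fun j => s j ≤ u ∧ u < s j + p j)).card < m)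
    (hstart : ∀ u ∈ Finset.Icc a b,
      (Finset.univ.filter (fun j => s j = u)).card = 1) :
    b + 2 ≤ a + m := by
  by_contra! hlong
  have hm : 0 < m := (Nat.zero_le _).trans_lt (hslack a (by simp [hab]))
  have hstarts : ∀ i < m, ∃ j, s j = a + i := fun i hi => by
    obtain ⟨j, hj⟩ := card_pos.mp ((hstart (a + i) (by simp; omega)).symm ▸ Nat.one_pos)
    exact ⟨j, (mem_filter.mp hj).2⟩
  have halive := card_le_card_alive_of_forall_start s p hp hstarts
  exact (hslack (a + m - 1) (by simp; omega)).not_ge halive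

/-- In a long instance (`p j ≥ m` for all jobs) with `g = 1`, any slack interval `[a,b]`
(each slot has fewer than `m` alive jobs and exactly one job start) has length at most
`m − 1`, i.e. `b − a + 1 ≤ m − 1`. -/
theorem stmt_6 (m n : ℕ) (p s : Fin n → ℕ) (hp : ∀ j, m ≤ p j)
    (a b : ℕ) (ha : 1 ≤ a) (hab : a ≤ b)
    (hslack : ∀ u ∈ Finset.Icc a b,
      (Finset.univ.filter (fun j => s j ≤ u ∧ u < s j + p j)).card < m)
    (hstart : ∀ u ∈ Finset.Icc a b,
      (Finset.univ.filter (fun j => s j = u)).card = 1) :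
    b + 2 ≤ a + m :=
  stmt_6_general m n p s hp a b hab hslack hstart
end

section
/- Given a 3-Partition instance with positive integers a_1,...,a_{3m} satisfying B/4 < a_j < B/2 and ∑a_j = mB, the BJSP instance with 3m jobs of processing times p_j = n²a_j (n = 3m, n² > 3n), m machines, and g = 1 admits a feasible schedule of makespan strictly less than n²B + n² if and only if the 3-Partition instance has a partition into m triples each summing to B. -/
/-- A schedule (machine assignment `mach`, start times `s ≥ 1`) for jobs with processing
times `proc` is feasible for BJSP with `g = 1` if at most one job starts per time slot and
jobs on the same machine do not overlap. -/
def Feasible11 {N m : ℕ} (proc : Fin N → ℕ) (mach : Fin N → Fin m) (s : Fin N → ℕ) : Prop :=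
  (∀ j, 1 ≤ s j) ∧
  (∀ t : ℕ, (Finset.univ.filter (fun j => s j = t)).card ≤ 1) ∧
  (∀ j k : Fin N, j ≠ k → mach j = mach k →
    (s j + proc j ≤ s k ∨ s k + proc k ≤ s j))

/-- 3-Partition reduction: with `n = 3m` jobs of processing times `n²·a_j` on `m` machines
and `g = 1`, a feasible schedule of makespan `< n²B + n²` exists iff the numbers
`a_1, …, a_{3m}` can be partitioned into `m` triples each summing to `B`. -/
theorem stmt_11 (m B : ℕ) (hm : 2 ≤ m) (a : Fin (3 * m) → ℕ)
    (hpos : ∀ j, 0 < a j) (hlow : ∀ j, B < 4 * a j) (hhigh : ∀ j, 2 * a j < B)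
    (hsum : ∑ j, a j = m * B) :
    (∃ (mach : Fin (3 * m) → Fin m) (s : Fin (3 * m) → ℕ),
      Feasible11 (fun j => (3 * m) ^ 2 * a j) mach s ∧
      ∀ j, s j + (3 * m) ^ 2 * a j < (3 * m) ^ 2 * B + (3 * m) ^ 2) ↔
    (∃ f : Fin (3 * m) → Fin m, ∀ i : Fin m,
      (Finset.univ.filter (fun j => f j = i)).card = 3 ∧
      ∑ j ∈ Finset.univ.filter (fun j => f j = i), a j = B) := by
  have hnsq : 3 * m < (3 * m) ^ 2 := by nlinarith
  have hnpos : 0 < (3 * m) ^ 2 := by positivity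
  have j0 : Fin (3 * m) := ⟨0, by omega⟩
  have hB : 0 < B := by have := hhigh j0; have := hpos j0; omega
  constructor
  · rintro ⟨mach, s, ⟨hs1, _, hdisj⟩, hmk⟩
    refine ⟨mach, fun i => ?_⟩
    -- total load on each machine is at most B
    have hload : ∀ i : Fin m,
        ∑ j ∈ Finset.univ.filter (fun j => mach j = i), a j ≤ B := by
      intro i
      set T := Finset.univ.filter (fun j => mach j = i) with hT
      set I : Fin (3 * m) → Finset ℕ :=
        fun j => Finset.Ico (s j) (s j + (3 * m) ^ 2 * a j) with hI
      have hpd : (T : Set (Fin (3 * m))).PairwiseDisjoint I := by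
        intro j hj k hk hjk
        have hmjk : mach j = mach k := by
          simp only [hT, Finset.mem_coe, Finset.mem_filter] at hj hk
          rw [hj.2, hk.2]
        rcases hdisj j k hjk hmjk with h | h <;>
        · simp only at h
          simp only [hI, Finset.disjoint_left, Finset.mem_Ico]
          intro t ht1 ht2
          omega
      have hcard : ∑ j ∈ T, (3 * m) ^ 2 * a j = (T.biUnion I).card := by
        rw [Finset.card_biUnion (fun j hj k hk hjk => hpd hj hk hjk)]
        simp [hI]
      have hsub : T.biUnion I ⊆ Finset.Ico 1 ((3 * m) ^ 2 * B + (3 * m) ^ 2) := by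
        intro t ht
        rw [Finset.mem_biUnion] at ht
        obtain ⟨j, _, hjt⟩ := ht
        simp only [hI, Finset.mem_Ico] at hjt ⊢
        have := hs1 j
        have := hmk j
        omega
      have hle : ∑ j ∈ T, (3 * m) ^ 2 * a j ≤ (3 * m) ^ 2 * B + (3 * m) ^ 2 - 1 := by
        rw [hcard]
        calc (T.biUnion I).card ≤ (Finset.Ico 1 ((3 * m) ^ 2 * B + (3 * m) ^ 2)).card :=
              Finset.card_le_card hsub
          _ = (3 * m) ^ 2 * B + (3 * m) ^ 2 - 1 := by rw [Nat.card_Ico]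
      rw [← Finset.mul_sum] at hle
      by_contra hgt
      push_neg at hgt
      have h6 : (3 * m) ^ 2 * (B + 1) ≤ (3 * m) ^ 2 * (∑ j ∈ T, a j) :=
        Nat.mul_le_mul_left _ (by omega)
      have h5 : (3 * m) ^ 2 * (B + 1) = (3 * m) ^ 2 * B + (3 * m) ^ 2 := by ring
      omega
    -- sum of loads is m * B, so each load is exactly B
    have htot : ∑ i : Fin m, (∑ j ∈ Finset.univ.filter (fun j => mach j = i), a j)
        = m * B := by
      rw [Finset.sum_fiberwise]
      exact hsum
    have hloadeq : ∀ i : Fin m,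
        ∑ j ∈ Finset.univ.filter (fun j => mach j = i), a j = B := by
      intro i
      have hcarde : (Finset.univ.erase i).card = m - 1 := by
        rw [Finset.card_erase_of_mem (Finset.mem_univ i), Finset.card_univ,
          Fintype.card_fin]
      have h1 : ∑ i' ∈ Finset.univ.erase i,
          (∑ j ∈ Finset.univ.filter (fun j => mach j = i'), a j) ≤ (m - 1) * B := by
        calc _ ≤ ∑ _i' ∈ Finset.univ.erase i, B :=
              Finset.sum_le_sum (fun i' _ => hload i')
          _ = (m - 1) * B := by rw [Finset.sum_const, hcarde, smul_eq_mul]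
      have h2 : (∑ j ∈ Finset.univ.filter (fun j => mach j = i), a j) +
          ∑ i' ∈ Finset.univ.erase i,
            (∑ j ∈ Finset.univ.filter (fun j => mach j = i'), a j) = m * B := by
        exact (Finset.add_sum_erase _
          (fun i' => ∑ j ∈ Finset.univ.filter (fun j => mach j = i'), a j)
          (Finset.mem_univ i)).trans htot
      have h3 : (m - 1) * B + B = m * B := by
        have hm1 : m - 1 + 1 = m := by omega
        calc (m - 1) * B + B = (m - 1 + 1) * B := by ring
          _ = m * B := by rw [hm1]
      have := hload i
      omega
    -- each machine has exactly 3 jobs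
    refine ⟨?_, hloadeq i⟩
    set T := Finset.univ.filter (fun j => mach j = i) with hT
    have h2B : 2 * B ≤ T.card * (B - 1) := by
      calc 2 * B = 2 * ∑ j ∈ T, a j := by rw [hloadeq i]
        _ = ∑ j ∈ T, 2 * a j := by rw [Finset.mul_sum]
        _ ≤ ∑ _j ∈ T, (B - 1) := Finset.sum_le_sum (fun j _ => by have := hhigh j; omega)
        _ = T.card * (B - 1) := by rw [Finset.sum_const, smul_eq_mul]
    have h4B : T.card * (B + 1) ≤ 4 * B := by
      calc T.card * (B + 1) = ∑ _j ∈ T, (B + 1) := by rw [Finset.sum_const, smul_eq_mul]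
        _ ≤ ∑ j ∈ T, 4 * a j := Finset.sum_le_sum (fun j _ => by have := hlow j; omega)
        _ = 4 * ∑ j ∈ T, a j := by rw [Finset.mul_sum]
        _ = 4 * B := by rw [hloadeq i]
    have hc3 : 3 ≤ T.card := by
      by_contra h
      push_neg at h
      have : T.card * (B - 1) ≤ 2 * (B - 1) := Nat.mul_le_mul_right _ (by omega)
      omega
    have hc3' : T.card ≤ 3 := by
      by_contra h
      push_neg at h
      have : 4 * (B + 1) ≤ T.card * (B + 1) := Nat.mul_le_mul_right _ (by omega)
      omega
    omega
  · rintro ⟨f, hf⟩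
    set P : Fin (3 * m) → ℕ :=
      fun j => ∑ k ∈ Finset.univ.filter (fun k => f k = f j ∧ k < j), a k with hP
    set s : Fin (3 * m) → ℕ := fun j => (3 * m) ^ 2 * P j + 1 + (j : ℕ) with hs
    -- key: P j + a j ≤ B, and monotonicity along a machine
    have hPB : ∀ j, P j + a j ≤ B := by
      intro j
      have hjn : j ∉ Finset.univ.filter (fun k => f k = f j ∧ k < j) := by
        simp
      have : P j + a j =
          ∑ k ∈ insert j (Finset.univ.filter (fun k => f k = f j ∧ k < j)), a k := by
        rw [Finset.sum_insert hjn]; ring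
      rw [this]
      have hsub : insert j (Finset.univ.filter (fun k => f k = f j ∧ k < j)) ⊆
          Finset.univ.filter (fun k => f k = f j) := by
        intro k hk
        rcases Finset.mem_insert.mp hk with rfl | hk
        · simp
        · simp only [Finset.mem_filter] at hk ⊢
          exact ⟨Finset.mem_univ _, hk.2.1⟩
      calc _ ≤ ∑ k ∈ Finset.univ.filter (fun k => f k = f j), a k :=
            Finset.sum_le_sum_of_subset hsub
        _ = B := (hf (f j)).2
    have hPmono : ∀ j k : Fin (3 * m), f j = f k → j < k → P j + a j ≤ P k := by
      intro j k hfjk hjk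
      have hjn : j ∉ Finset.univ.filter (fun k' => f k' = f j ∧ k' < j) := by simp
      have heq : P j + a j =
          ∑ k' ∈ insert j (Finset.univ.filter (fun k' => f k' = f j ∧ k' < j)), a k' := by
        rw [Finset.sum_insert hjn]; ring
      rw [heq]
      apply Finset.sum_le_sum_of_subset
      intro x hx
      rcases Finset.mem_insert.mp hx with rfl | hx
      · simp only [Finset.mem_filter, Finset.mem_univ, true_and]
        exact ⟨hfjk, hjk⟩
      · simp only [Finset.mem_filter, Finset.mem_univ, true_and] at hx ⊢
        refine ⟨hx.1.trans hfjk, hx.2.trans hjk⟩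
    have hsinj : Function.Injective s := by
      intro j k hjk
      simp only [hs] at hjk
      have hj : (j : ℕ) < (3 * m) ^ 2 := lt_trans j.isLt hnsq
      have hk : (k : ℕ) < (3 * m) ^ 2 := lt_trans k.isLt hnsq
      have heq : (3 * m) ^ 2 * P j + (j : ℕ) = (3 * m) ^ 2 * P k + (k : ℕ) := by omega
      have hPjk : P j = P k := by
        have h1 : ((3 * m) ^ 2 * P j + (j : ℕ)) / (3 * m) ^ 2 = P j := by
          rw [Nat.mul_add_div hnpos, Nat.div_eq_of_lt hj, Nat.add_zero]
        have h2 : ((3 * m) ^ 2 * P k + (k : ℕ)) / (3 * m) ^ 2 = P k := by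
          rw [Nat.mul_add_div hnpos, Nat.div_eq_of_lt hk, Nat.add_zero]
        rw [← h1, ← h2, heq]
      have : (j : ℕ) = (k : ℕ) := by rw [hPjk] at heq; omega
      exact Fin.ext this
    refine ⟨f, s, ⟨fun j => by simp only [hs]; omega, ?_, ?_⟩, ?_⟩
    · intro t
      rw [Finset.card_le_one]
      intro j hj k hk
      simp only [Finset.mem_filter] at hj hk
      exact hsinj (hj.2.trans hk.2.symm)
    · intro j k hjk hfjk
      rcases lt_or_gt_of_ne hjk with h | h
      · left
        have h1 : P j + a j ≤ P k := hPmono j k hfjk h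
        have h2 : (3 * m) ^ 2 * (P j + a j) ≤ (3 * m) ^ 2 * P k :=
          Nat.mul_le_mul_left _ h1
        simp only [hs]
        have h3 : (3 * m) ^ 2 * (P j + a j) = (3 * m) ^ 2 * P j + (3 * m) ^ 2 * a j := by
          ring
        have h4 : (j : ℕ) < (k : ℕ) := h
        omega
      · right
        have h1 : P k + a k ≤ P j := hPmono k j hfjk.symm h
        have h2 : (3 * m) ^ 2 * (P k + a k) ≤ (3 * m) ^ 2 * P j :=
          Nat.mul_le_mul_left _ h1
        simp only [hs]
        have h3 : (3 * m) ^ 2 * (P k + a k) = (3 * m) ^ 2 * P k + (3 * m) ^ 2 * a k := by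
          ring
        have h4 : (k : ℕ) < (j : ℕ) := h
        omega
    · intro j
      have h1 : (3 * m) ^ 2 * (P j + a j) ≤ (3 * m) ^ 2 * B :=
        Nat.mul_le_mul_left _ (hPB j)
      have h2 : (3 * m) ^ 2 * (P j + a j) = (3 * m) ^ 2 * P j + (3 * m) ^ 2 * a j := by
        ring
      have h3 : (j : ℕ) < 3 * m := j.isLt
      simp only [hs]
      omega
end
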